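/- If L′ and L″ are regular languages satisfying the partial order condition, then L′ ∩ L″ satisfies the partial order condition. -/

import Mathlib

/-!
Let `q₁ ≠ q₂`, `x`, `y` witness a failure of the condition in the minimal automaton of
`L' ∩ L''`. Every state language of that automaton is `K' ∩ K''` for a
state `(K', K'')` of the product of the left-quotient automata of `L'` and `L''`, and this
product is finite. Replacing `x` by an idempotent power `X` and `y` by `y (X y)ᵐ⁻¹`, where
`(X y)ᵐ` is idempotent as well, lifts the failure to a pair of distinct states of the product;
they differ in one coordinate, which gives a failure of the condition for `L'` or for `L''`.
-/

/-- Extended transition function of a DFA. -/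
def dfaEval {Q A : Type} (δ : Q → A → Q) (q : Q) (w : List A) : Q :=
  w.foldl δ q

/-- Two states are distinguishable if some string sends exactly one of them into `F`. -/
def Disting {Q A : Type} (δ : Q → A → Q) (F : Set Q) (q1 q2 : Q) : Prop :=
  ∃ z : List A, ¬ (dfaEval δ q1 z ∈ F ↔ dfaEval δ q2 z ∈ F)

/-- The partial order condition for a DFA. -/
def POC {Q A : Type} (δ : Q → A → Q) (F : Set Q) : Prop :=
  ¬ ∃ (q1 q2 : Q) (x y : List A), q1 ≠ q2 ∧ Disting δ F q1 q2 ∧ x ≠ [] ∧ y ≠ [] ∧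
      dfaEval δ q1 x = q2 ∧ dfaEval δ q2 x = q2 ∧ dfaEval δ q2 y = q1

/-- A language is regular: accepted by some finite DFA. -/
def RegularLang {A : Type} (L : Set (List A)) : Prop :=
  ∃ (n : ℕ) (δ : Fin n → A → Fin n) (q0 : Fin n) (F : Set (Fin n)),
    ∀ w, w ∈ L ↔ dfaEval δ q0 w ∈ F

/-- A language satisfies the partial order condition if its minimal DFA does —
formalized as: every finite DFA accepting it with all states reachable and distinct
states distinguishable satisfies the partial order condition. -/
def LangPOC {A : Type} (L : Set (List A)) : Prop :=
  ∀ (n : ℕ) (δ : Fin n → A → Fin n) (q0 : Fin n) (F : Set (Fin n)),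
    (∀ w, w ∈ L ↔ dfaEval δ q0 w ∈ F) →
    (∀ q : Fin n, ∃ s : List A, dfaEval δ q0 s = q) →
    (∀ p q : Fin n, p ≠ q → Disting δ F p q) →
    POC δ F

theorem dfaEval_append {Q A : Type} (δ : Q → A → Q) (q : Q) (u v : List A) :
    dfaEval δ q (u ++ v) = dfaEval δ (dfaEval δ q u) v :=
  List.foldl_append

theorem dfaEval_map {Q M A : Type} {δ : Q → A → Q} {δ' : M → A → M} {π : Q → M}
    (hπ : ∀ q a, π (δ q a) = δ' (π q) a) (q : Q) (w : List A) :
    π (dfaEval δ q w) = dfaEval δ' (π q) w :=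
  (List.foldl_hom π fun q a => (hπ q a).symm).symm

theorem dfaEval_flatten_replicate {Q A : Type} (δ : Q → A → Q) (q : Q) (w : List A) (n : ℕ) :
    dfaEval δ q (List.replicate n w).flatten = (dfaEval δ · w)^[n] q := by
  induction n generalizing q with
  | zero => rfl
  | succ n ih =>
    rw [List.replicate_succ, List.flatten_cons, dfaEval_append, ih, Function.iterate_succ_apply]

theorem exists_isIdempotentElem_pow {M : Type*} [Monoid M] [Finite M] (a : M) :
    ∃ n ≠ 0, IsIdempotentElem (a ^ n) := by
  obtain ⟨i, j, hij, h⟩ := Finite.exists_ne_map_eq_of_infinite (a ^ · : ℕ → M)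
  wlog hlt : i < j generalizing i j
  · exact this j i hij.symm h.symm (by omega)
  obtain ⟨p, hp, rfl⟩ : ∃ p ≠ 0, j = i + p := ⟨j - i, by omega, by omega⟩
  have periodic : ∀ k, a ^ (i + k * p) = a ^ i := by
    intro k
    induction k with
    | zero => simp
    | succ k ih => rw [show i + (k + 1) * p = i + k * p + p by ring, pow_add, ih, ← pow_add, ← h]
  obtain ⟨n, hn⟩ : ∃ n, n = (i + 1) * p := ⟨_, rfl⟩
  have hin : i ≤ n := by rw [hn]; nlinarith [Nat.one_le_iff_ne_zero.mpr hp]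
  refine ⟨n, by rw [hn]; positivity, ?_⟩
  calc a ^ n * a ^ n = a ^ (i + (i + 1) * p) * a ^ (n - i) := by
        rw [← pow_add, ← pow_add]; congr 1; omega
    _ = a ^ n := by rw [periodic, ← pow_add]; congr 1; omega

theorem Function.exists_iterate_idempotent {α : Type*} [Finite α] (g : α → α) :
    ∃ n ≠ 0, ∀ a, g^[n] (g^[n] a) = g^[n] a := by
  have : Finite (Function.End α) := inferInstanceAs (Finite (α → α))
  obtain ⟨n, hn, h⟩ := exists_isIdempotentElem_pow (M := Function.End α) g
  exact ⟨n, hn, congrFun h⟩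

def ForbiddenPattern {Q A : Type} (δ : Q → A → Q) (q1 q2 : Q) (x y : List A) : Prop :=
  x ≠ [] ∧ y ≠ [] ∧ dfaEval δ q1 x = q2 ∧ dfaEval δ q2 x = q2 ∧ dfaEval δ q2 y = q1

theorem POC.not_forbiddenPattern {Q A : Type} {δ : Q → A → Q} {F : Set Q} (h : POC δ F)
    {q1 q2 : Q} {x y : List A} (hne : q1 ≠ q2) (hd : Disting δ F q1 q2) :
    ¬ ForbiddenPattern δ q1 q2 x y :=
  fun hp => h ⟨q1, q2, x, y, hne, hd, hp⟩

namespace ForbiddenPattern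

variable {Q M A : Type} {δ : Q → A → Q} {δ' : M → A → M} {π : Q → M}

theorem map (hπ : ∀ q a, π (δ q a) = δ' (π q) a) {q1 q2 : Q} {x y : List A}
    (h : ForbiddenPattern δ q1 q2 x y) : ForbiddenPattern δ' (π q1) (π q2) x y := by
  obtain ⟨hx, hy, h1, h2, h3⟩ := h
  exact ⟨hx, hy, by rw [← dfaEval_map hπ, h1], by rw [← dfaEval_map hπ, h2],
    by rw [← dfaEval_map hπ, h3]⟩

theorem lift [Finite Q] (hπ : ∀ q a, π (δ q a) = δ' (π q) a) {p : Q} {q2 : M} {x y : List A}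
    (h : ForbiddenPattern δ' (π p) q2 x y) :
    ∃ r1 r2 X Y, π r1 = π p ∧ π r2 = q2 ∧ ForbiddenPattern δ r1 r2 X Y := by
  obtain ⟨hx, hy, h1, h2, h3⟩ := h
  obtain ⟨n, hn, hX⟩ := Function.exists_iterate_idempotent (dfaEval δ · x)
  obtain ⟨n, rfl⟩ := Nat.exists_eq_succ_of_ne_zero hn
  set X := (List.replicate (n + 1) x).flatten with hXdef
  obtain ⟨m, hm, hV⟩ := Function.exists_iterate_idempotent (dfaEval δ · (X ++ y))
  obtain ⟨m, rfl⟩ := Nat.exists_eq_succ_of_ne_zero hm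
  have evalX : ∀ q, dfaEval δ' q X = dfaEval δ' (dfaEval δ' q x) (List.replicate n x).flatten :=
    fun q => by rw [hXdef, List.replicate_succ, List.flatten_cons, dfaEval_append]
  have hpX : dfaEval δ' (π p) X = q2 := by
    rw [evalX, h1, dfaEval_flatten_replicate, Function.iterate_fixed h2]
  have hpV : dfaEval δ' (π p) (X ++ y) = π p := by rw [dfaEval_append, hpX, h3]
  set r1 := dfaEval δ p (List.replicate (m + 1) (X ++ y)).flatten
  have hr1 : π r1 = π p := by
    rw [dfaEval_map hπ, dfaEval_flatten_replicate, Function.iterate_fixed hpV]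
  refine ⟨r1, dfaEval δ r1 X, X, y ++ (List.replicate m (X ++ y)).flatten, hr1,
    by rw [dfaEval_map hπ, hr1, hpX], ?_, ?_, rfl, ?_, ?_⟩
  · exact List.append_ne_nil_of_left_ne_nil hx _
  · exact List.append_ne_nil_of_left_ne_nil hy _
  · simp only [hXdef, dfaEval_flatten_replicate]
    exact hX r1
  · rw [← dfaEval_append, ← List.append_assoc, dfaEval_append, dfaEval_flatten_replicate,
      ← Function.iterate_succ_apply]
    simp only [r1, dfaEval_flatten_replicate]
    exact hV p

end ForbiddenPattern

def stateLang {Q A : Type} (δ : Q → A → Q) (F : Set Q) (q : Q) : Language A :=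
  {z | dfaEval δ q z ∈ F}

def leftQuotientStep {A : Type} (K : Language A) (a : A) : Language A :=
  K.leftQuotient [a]

theorem dfaEval_leftQuotientStep {A : Type} (K : Language A) (w : List A) :
    dfaEval leftQuotientStep K w = K.leftQuotient w := by
  induction w generalizing K with
  | nil => rfl
  | cons a w ih => exact (ih _).trans (K.leftQuotient_append [a] w).symm

section stateLang

variable {Q A : Type} {δ : Q → A → Q} {F : Set Q}

theorem stateLang_step (q : Q) (a : A) :
    stateLang δ F (δ q a) = leftQuotientStep (stateLang δ F q) a :=
  rfl

theorem stateLang_dfaEval {L : Language A} {q0 : Q} (hacc : ∀ w, w ∈ L ↔ dfaEval δ q0 w ∈ F)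
    (s : List A) : stateLang δ F (dfaEval δ q0 s) = L.leftQuotient s := by
  ext z
  rw [Language.mem_leftQuotient, hacc, dfaEval_append]
  rfl

theorem disting_iff_stateLang_ne {p q : Q} :
    Disting δ F p q ↔ stateLang δ F p ≠ stateLang δ F q :=
  not_forall.symm.trans (not_congr Set.ext_iff.symm)

theorem disting_preimage_iff {M : Type} {δ' : M → A → M} {π : Q → M}
    (hπ : ∀ q a, π (δ q a) = δ' (π q) a) {F' : Set M} {p q : Q} :
    Disting δ (π ⁻¹' F') p q ↔ Disting δ' F' (π p) (π q) := by
  simp only [Disting, Set.mem_preimage, dfaEval_map hπ]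

end stateLang

theorem Language.val_dfaEval_toDFA {A : Type} (L : Language A) (s : Set.range L.leftQuotient)
    (w : List A) : (dfaEval L.toDFA.step s w).val = s.val.leftQuotient w :=
  (dfaEval_map (δ' := leftQuotientStep) (π := Subtype.val) (fun _ _ => rfl) s w).trans
    (dfaEval_leftQuotientStep _ w)

theorem stateLang_toDFA {A : Type} (L : Language A) (s : Set.range L.leftQuotient) :
    stateLang L.toDFA.step L.toDFA.accept s = s.val := by
  ext z
  change [] ∈ (dfaEval L.toDFA.step s z).val ↔ z ∈ s.val
  rw [L.val_dfaEval_toDFA, Language.mem_leftQuotient, List.append_nil]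

theorem Language.toDFA_disting {A : Type} (L : Language A) {s t : Set.range L.leftQuotient}
    (hst : s ≠ t) : Disting L.toDFA.step L.toDFA.accept s t := by
  rw [disting_iff_stateLang_ne, stateLang_toDFA, stateLang_toDFA]
  exact Subtype.val_injective.ne hst

theorem RegularLang.finite_range_leftQuotient {A : Type} {L : Set (List A)} (h : RegularLang L) :
    (Set.range (Language.leftQuotient L)).Finite := by
  obtain ⟨n, δ, q0, F, hacc⟩ := h
  exact Language.IsRegular.finite_range_leftQuotient
    ⟨Fin n, inferInstance, ⟨δ, q0, F⟩, Set.ext fun w => (hacc w).symm⟩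

theorem LangPOC.poc {Q A : Type} [Finite Q] {L : Set (List A)} (h : LangPOC L)
    {δ : Q → A → Q} {q0 : Q} {F : Set Q} (hacc : ∀ w, w ∈ L ↔ dfaEval δ q0 w ∈ F)
    (hreach : ∀ q, ∃ s, dfaEval δ q0 s = q) (hdist : ∀ p q, p ≠ q → Disting δ F p q) :
    POC δ F := by
  obtain ⟨m, ⟨e⟩⟩ := Finite.exists_equiv_fin Q
  let δ' : Fin m → A → Fin m := fun i a => e (δ (e.symm i) a)
  have he : ∀ q a, e (δ q a) = δ' (e q) a := by simp [δ']
  have he' : ∀ i a, e.symm (δ' i a) = δ (e.symm i) a := by simp [δ']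
  have hpoc : POC δ' (e.symm ⁻¹' F) := by
    refine h m δ' (e q0) _ (fun w => ?_) (fun i => ?_) (fun i j hij => ?_)
    · rw [hacc, Set.mem_preimage, dfaEval_map he', e.symm_apply_apply]
    · obtain ⟨s, hs⟩ := hreach (e.symm i)
      exact ⟨s, e.symm.injective (by rw [dfaEval_map he', e.symm_apply_apply, hs])⟩
    · exact (disting_preimage_iff he').2 (hdist _ _ (e.symm.injective.ne hij))
  rintro ⟨q1, q2, x, y, hne, hd, hpat⟩
  refine hpoc.not_forbiddenPattern (e.injective.ne hne) ?_ (ForbiddenPattern.map he hpat)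
  rwa [disting_preimage_iff he', e.symm_apply_apply, e.symm_apply_apply]

theorem LangPOC.poc_toDFA {A : Type} {L : Language A} (h : LangPOC L) (hreg : RegularLang L) :
    POC L.toDFA.step L.toDFA.accept := by
  have := hreg.finite_range_leftQuotient.to_subtype
  refine h.poc (q0 := L.toDFA.start) (fun w => ?_) (fun s => ?_) (fun s t hst => ?_)
  · exact (Set.ext_iff.1 (stateLang_toDFA L L.toDFA.start) w).symm
  · obtain ⟨_, w, rfl⟩ := s
    exact ⟨w, Subtype.ext (L.val_dfaEval_toDFA _ w)⟩
  · exact L.toDFA_disting hst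

/-- if regular languages `L′` and `L″` satisfy the partial order
condition, then so does `L′ ∩ L″`. -/
theorem partial_order_condition_closed_under_intersection {A : Type}
    (L' L'' : Set (List A)) (hreg' : RegularLang L') (hreg'' : RegularLang L'')
    (h' : LangPOC L') (h'' : LangPOC L'') :
    LangPOC (L' ∩ L'') := by
  rintro n δ q0 F hacc hreach - ⟨q1, q2, x, y, -, hdist, hpat⟩
  obtain ⟨s, rfl⟩ := hreach q1
  have := hreg'.finite_range_leftQuotient.to_subtype
  have := hreg''.finite_range_leftQuotient.to_subtype
  let M' := Language.toDFA L'
  let M'' := Language.toDFA L''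
  let P := Set.range (Language.leftQuotient L') × Set.range (Language.leftQuotient L'')
  let δP : P → A → P := fun r a => (M'.step r.1 a, M''.step r.2 a)
  let π : P → Language A := fun r => r.1.val ⊓ r.2.val
  have hπ : ∀ r a, π (δP r a) = leftQuotientStep (π r) a := fun _ _ => rfl
  have hp : π (dfaEval δP (M'.start, M''.start) s) = stateLang δ F (dfaEval δ q0 s) := by
    rw [dfaEval_map hπ, dfaEval_leftQuotientStep, stateLang_dfaEval hacc]
    rfl
  obtain ⟨r1, r2, X, Y, hr1, hr2, hpatP⟩ := ForbiddenPattern.lift hπ (by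
    rw [hp]; exact ForbiddenPattern.map (stateLang_step (F := F)) hpat)
  have hr : r1.1 ≠ r2.1 ∨ r1.2 ≠ r2.2 := by
    have : π r1 ≠ π r2 := by rwa [hr1, hr2, hp, ← disting_iff_stateLang_ne]
    contrapose! this
    simp only [π, this]
  rcases hr with h | h
  · exact (h'.poc_toDFA hreg').not_forbiddenPattern h (Language.toDFA_disting L' h)
      (hpatP.map (π := Prod.fst) fun _ _ => rfl)
  · exact (h''.poc_toDFA hreg'').not_forbiddenPattern h (Language.toDFA_disting L'' h)
      (hpatP.map (π := Prod.snd) fun _ _ => rfl)
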